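/- arXiv:2306.03303 — 3 statements merged into one kernel-verified Lean document; each statement's English description precedes it below -/
import Mathlib

section
/- Let (X,ψ) be a weighted space and let f: X → ℝ be a function such that the restriction f|_{K_R} is continuous on K_R for every R > 0 and lim_{R→∞} sup_{x ∈ X \ K_R} |f(x)|/ψ(x) = 0. Then f ∈ 𝓑_ψ(X). In particular, every continuous f: X → ℝ satisfying lim_{R→∞} sup_{x ∈ X \ K_R} |f(x)|/ψ(x) = 0 belongs to 𝓑_ψ(X). -/
/-!
Given `ε > 0`, the decay condition and the boundedness of `f` on a compact sublevel set give an
`R` with `|f| ≤ (ε/2) R` on `K_R` and `|f| ≤ (ε/2) ψ` off `K_R`. Tietze's theorem extends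
`f|_{K_R}` to a continuous `g` with `|g| ≤ (ε/2) R`; then `f - g` vanishes on `K_R`, and off `K_R`
we have `|f - g| ≤ (ε/2) ψ + (ε/2) R ≤ ε ψ`.
-/

open Filter Topology

/-- `f` belongs to `𝓑_ψ(X)`, the closure of the bounded continuous functions `C⁰_b(X)`
with respect to the weighted norm `‖f‖_{𝓑_ψ} = sup_x |f x| / ψ x`. -/
def MemBpsi {X : Type*} [TopologicalSpace X] (ψ : X → ℝ) (f : X → ℝ) : Prop :=
  ∀ ε > (0 : ℝ), ∃ g : X → ℝ, Continuous g ∧ (∃ C : ℝ, ∀ x, |g x| ≤ C) ∧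
    ∀ x, |f x - g x| ≤ ε * ψ x

theorem IsCompact.exists_continuous_forall_mem_eqOn {X : Type*} [TopologicalSpace X] [T35Space X]
    {K : Set X} (hK : IsCompact K) {f : X → ℝ} (hf : ContinuousOn f K) {t : Set ℝ}
    [t.OrdConnected] (hft : ∀ x ∈ K, f x ∈ t) (hne : t.Nonempty) :
    ∃ g : X → ℝ, Continuous g ∧ (∀ x, g x ∈ t) ∧ Set.EqOn g f K := by
  have : CompactSpace K := isCompact_iff_compactSpace.mp hK
  -- `K` sits as a closed subset in the compact Hausdorff, hence normal, space `βX`.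
  have he : IsClosedEmbedding (stoneCechUnit ∘ (↑) : K → StoneCech X) :=
    (continuous_stoneCechUnit.comp continuous_subtype_val).isClosedEmbedding
      (injective_stoneCechUnit_of_t35Space.comp Subtype.val_injective)
  obtain ⟨G, hGt, hGf⟩ := ContinuousMap.exists_extension_forall_mem_of_isClosedEmbedding
    ⟨K.domRestrict f, hf.domRestrict⟩ (fun x => hft x x.2) hne he
  exact ⟨G ∘ stoneCechUnit, G.continuous.comp continuous_stoneCechUnit, fun x => hGt _,
    fun x hx => congr_fun hGf ⟨x, hx⟩⟩

theorem exists_abs_le_on_sublevel_of_decay {X : Type*} [TopologicalSpace X] {ψ : X → ℝ}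
    {f : X → ℝ} (hψ : ∀ R > 0, IsCompact {x : X | ψ x ≤ R})
    (hf : ∀ R > 0, ContinuousOn f {x : X | ψ x ≤ R}) {δ : ℝ} (hδ : 0 < δ)
    (hdecay : ∃ R > (0 : ℝ), ∀ x, R < ψ x → |f x| ≤ δ * ψ x) :
    ∃ R > (0 : ℝ), (∀ x, ψ x ≤ R → |f x| ≤ δ * R) ∧ ∀ x, R < ψ x → |f x| ≤ δ * ψ x := by
  obtain ⟨R, hR, hout⟩ := hdecay
  obtain ⟨M, hM⟩ := (hψ R hR).exists_bound_of_continuousOn (hf R hR)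
  set R' := max R (M / δ)
  have hRR' : R ≤ R' := le_max_left _ _
  have hMR' : M ≤ δ * R' := by
    rw [← div_le_iff₀' hδ]; exact le_max_right _ _
  refine ⟨R', hR.trans_le hRR', fun x hx => ?_, fun x hx => hout x (hRR'.trans_lt hx)⟩
  rcases le_or_gt (ψ x) R with hxR | hxR
  · exact (hM x hxR).trans hMR'
  · exact (hout x hxR).trans (by gcongr)

/-- **(Lemma 2.5 (2)).** Let `(X, ψ)` be a weighted space.  If `f : X → ℝ` is continuous
on every compact sublevel set `K_R = {x | ψ x ≤ R}` (for `R > 0`) and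
`lim_{R → ∞} sup_{x ∉ K_R} |f x|/ψ x = 0`, then `f ∈ 𝓑_ψ(X)`.  In particular,
`f ∈ 𝓑_ψ(X)` for every continuous `f : X → ℝ` satisfying this decay condition. -/
theorem memBpsi_of_continuousOn_of_decay
    {X : Type*} [TopologicalSpace X] [T2Space X] [CompletelyRegularSpace X]
    (ψ : X → ℝ) (hψpos : ∀ x, 0 < ψ x)
    (hψadm : ∀ R > 0, IsCompact {x : X | ψ x ≤ R}) :
    (∀ f : X → ℝ,
      (∀ R > 0, ContinuousOn f {x : X | ψ x ≤ R}) →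
      (∀ ε > (0 : ℝ), ∃ R > (0 : ℝ), ∀ x, R < ψ x → |f x| ≤ ε * ψ x) →
      MemBpsi ψ f) ∧
    (∀ f : X → ℝ, Continuous f →
      (∀ ε > (0 : ℝ), ∃ R > (0 : ℝ), ∀ x, R < ψ x → |f x| ≤ ε * ψ x) →
      MemBpsi ψ f) := by
  have : T35Space X := {}
  have main : ∀ f : X → ℝ, (∀ R > 0, ContinuousOn f {x : X | ψ x ≤ R}) →
      (∀ ε > (0 : ℝ), ∃ R > (0 : ℝ), ∀ x, R < ψ x → |f x| ≤ ε * ψ x) → MemBpsi ψ f := by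
    intro f hf hdecay ε hε
    obtain ⟨R, hR, hin, hout⟩ := exists_abs_le_on_sublevel_of_decay hψadm hf (half_pos hε)
      (hdecay _ (half_pos hε))
    obtain ⟨g, hg, hgL, hgf⟩ := (hψadm R hR).exists_continuous_forall_mem_eqOn (hf R hR)
      (t := Set.Icc (-(ε / 2 * R)) (ε / 2 * R)) (fun x hx => abs_le.mp (hin x hx))
      (Set.nonempty_Icc.mpr (by linarith [mul_pos (half_pos hε) hR]))
    refine ⟨g, hg, ⟨_, fun x => abs_le.mpr (hgL x)⟩, fun x => ?_⟩
    rcases le_or_gt (ψ x) R with hx | hx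
    · rw [hgf hx, sub_self, abs_zero]
      exact (mul_pos hε (hψpos x)).le
    · calc |f x - g x| ≤ |f x| + |g x| := abs_sub _ _
        _ ≤ ε / 2 * ψ x + ε / 2 * R := add_le_add (hout x hx) (abs_le.mpr (hgL x))
        _ ≤ ε * ψ x := by nlinarith
  exact ⟨main, fun f hf => main f fun R _ => hf.continuousOn⟩
end

section
/- Let X₀ denote a vector space X equipped with a norm ‖·‖₀, and let ψ(x) = η(‖x‖₁) be an admissible weight function on X, where η: [0,∞) → (0,∞) is continuous and non-decreasing with lim_{r→∞} r/η(r) = 0, and ‖·‖₁ is a norm on X such that the identity map (X,‖·‖₁) → (X,‖·‖₀) is continuous. Then the set 𝓗 := { x ↦ l(x) + b : l ∈ X₀*, b ∈ ℝ } is contained in 𝓑_ψ(X) and is an additive family on X, i.e. it is closed under addition, point separating, and contains the constant functions. -/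
open Filter Topology

/-- **(Lemma 4.8: additive family from dual functionals).**
Let `X₀ = (X, ‖·‖₀)` be a normed vector space (with its norm topology), let `N₁` be a
further norm on `X` such that the identity `(X, N₁) → (X, ‖·‖₀)` is continuous, and let
`ψ(x) = η(N₁ x)` be an admissible weight function on `X`, where `η : [0,∞) → (0,∞)` is
continuous and non-decreasing with `lim_{r→∞} r/η(r) = 0`.  Then
`𝓗 = { x ↦ l(x) + b : l ∈ X₀*, b ∈ ℝ }` is contained in `𝓑_ψ(X)` and is an additive
family on `X`: closed under addition, point separating, and containing the constants. -/
theorem dual_functionals_additive_family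
    {X : Type*} [NormedAddCommGroup X] [NormedSpace ℝ X]
    (N₁ : X → ℝ)
    (hN₁nonneg : ∀ x, 0 ≤ N₁ x)
    (hN₁zero : ∀ x, N₁ x = 0 ↔ x = 0)
    (hN₁add : ∀ x y, N₁ (x + y) ≤ N₁ x + N₁ y)
    (hN₁smul : ∀ (c : ℝ) (x : X), N₁ (c • x) = |c| * N₁ x)
    (hid : ∃ c : ℝ, ∀ x, ‖x‖ ≤ c * N₁ x)
    (η : ℝ → ℝ)
    (hηcont : ContinuousOn η (Set.Ici 0))
    (hηmono : MonotoneOn η (Set.Ici 0))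
    (hηpos : ∀ r ∈ Set.Ici (0 : ℝ), 0 < η r)
    (hηlim : Tendsto (fun r => r / η r) atTop (𝓝 0))
    (hadm : ∀ R > 0, IsCompact {x : X | η (N₁ x) ≤ R}) :
    (∀ h ∈ {h : X → ℝ | ∃ (l : X →L[ℝ] ℝ) (b : ℝ), h = fun x => l x + b},
      MemBpsi (fun x => η (N₁ x)) h) ∧
    (∀ h₁ ∈ {h : X → ℝ | ∃ (l : X →L[ℝ] ℝ) (b : ℝ), h = fun x => l x + b},
     ∀ h₂ ∈ {h : X → ℝ | ∃ (l : X →L[ℝ] ℝ) (b : ℝ), h = fun x => l x + b},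
      h₁ + h₂ ∈ {h : X → ℝ | ∃ (l : X →L[ℝ] ℝ) (b : ℝ), h = fun x => l x + b}) ∧
    (∀ x₁ x₂ : X, x₁ ≠ x₂ →
      ∃ h ∈ {h : X → ℝ | ∃ (l : X →L[ℝ] ℝ) (b : ℝ), h = fun x => l x + b}, h x₁ ≠ h x₂) ∧
    (∀ b : ℝ,
      (fun _ : X => b) ∈ {h : X → ℝ | ∃ (l : X →L[ℝ] ℝ) (b : ℝ), h = fun x => l x + b}) := by
  obtain ⟨c, hc⟩ := hid
  refine ⟨?_, ?_, ?_, ?_⟩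
  · rintro h ⟨l, b, rfl⟩ ε hε
    set K : ℝ := |‖l‖ * c| + 1 with hKdef
    have hK : 0 < K := by positivity
    have h1 : ∀ᶠ r in atTop, r / η r < ε / K :=
      hηlim.eventually_lt_const (by positivity)
    obtain ⟨R₀, hR₀⟩ := eventually_atTop.mp h1
    set R : ℝ := max R₀ 0 with hRdef
    have hR0 : 0 ≤ R := le_max_right _ _
    set M : ℝ := K * R + |b| with hMdef
    have hM0 : 0 ≤ M := by positivity
    refine ⟨fun x => min M (max (-M) (l x + b)), ?_, ⟨M, fun x => ?_⟩, fun x => ?_⟩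
    · exact continuous_const.min (continuous_const.max (l.continuous.add continuous_const))
    · exact abs_le.mpr ⟨le_min (neg_le_self hM0) (le_max_left _ _), min_le_left _ _⟩
    · have hηx : 0 < η (N₁ x) := hηpos _ (hN₁nonneg x)
      set t : ℝ := l x + b with htdef
      have habs : |t| ≤ K * N₁ x + |b| := by
        have h2 : |l x| ≤ ‖l‖ * ‖x‖ := l.le_opNorm x
        have h3 : ‖l‖ * ‖x‖ ≤ (‖l‖ * c) * N₁ x := by
          rw [mul_assoc]
          exact mul_le_mul_of_nonneg_left (hc x) (norm_nonneg l)
        have h4 : (‖l‖ * c) * N₁ x ≤ K * N₁ x :=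
          mul_le_mul_of_nonneg_right (le_trans (le_abs_self _) (by simp [hKdef])) (hN₁nonneg x)
        calc |t| ≤ |l x| + |b| := abs_add_le _ _
          _ ≤ K * N₁ x + |b| := by linarith
      have key : M < |t| → |t| - M ≤ ε * η (N₁ x) := by
        intro hMt
        have hxR : R < N₁ x := by
          have : K * R < K * N₁ x := by
            have := habs; simp only [hMdef] at hMt; linarith
          exact lt_of_mul_lt_mul_left this hK.le
        have hfrac : N₁ x / η (N₁ x) < ε / K :=
          hR₀ (N₁ x) (le_trans (le_max_left _ _) hxR.le)
        have hKN : K * N₁ x ≤ ε * η (N₁ x) := by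
          rw [div_lt_div_iff₀ hηx hK] at hfrac
          nlinarith
        have : |t| - M ≤ K * N₁ x := by
          have := habs
          have hKR : 0 ≤ K * R := by positivity
          simp only [hMdef]; linarith
        linarith
      show |t - min M (max (-M) t)| ≤ ε * η (N₁ x)
      rcases le_or_gt t M with h5 | h5
      · rcases le_or_gt (-M) t with h6 | h6
        · have : min M (max (-M) t) = t := by
            rw [max_eq_right h6, min_eq_right h5]
          rw [this, sub_self, abs_zero]
          positivity
        · have hg : min M (max (-M) t) = -M := by
            rw [max_eq_left h6.le, min_eq_right (by linarith)]
          rw [hg]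
          have hMt : M < |t| := by
            rw [abs_of_neg (by linarith)]; linarith
          have : |t - -M| = |t| - M := by
            rw [abs_of_neg (by linarith), sub_neg_eq_add, abs_of_nonpos (by linarith)]
            ring
          rw [this]; exact key hMt
      · have hg : min M (max (-M) t) = M := by
          rw [max_eq_right (by linarith), min_eq_left h5.le]
        rw [hg]
        have hMt : M < |t| := by rw [abs_of_pos (by linarith)]; exact h5
        have : |t - M| = |t| - M := by
          rw [abs_of_nonneg (by linarith), abs_of_pos (by linarith)]
        rw [this]; exact key hMt
  · rintro h₁ ⟨l₁, b₁, rfl⟩ h₂ ⟨l₂, b₂, rfl⟩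
    exact ⟨l₁ + l₂, b₁ + b₂, by ext x; simp; ring⟩
  · intro x₁ x₂ hne
    obtain ⟨l, hl⟩ := SeparatingDual.exists_separating_of_ne (R := ℝ) hne
    exact ⟨fun x => l x + 0, ⟨l, 0, rfl⟩, by simpa using hl⟩
  · intro b
    exact ⟨0, b, by ext x; simp⟩
end

section
/- Let (X,‖·‖_X) be a dual Banach space equipped with the weak-* topology, with predual (E,‖·‖_E) and isometric isomorphism Φ: X → E*, and let ψ(x) = η(‖x‖_X) be an admissible weight function on X, where η: [0,∞) → (0,∞) is continuous and non-decreasing with lim_{r→∞} r/η(r) = 0. Then the set 𝓗 := { x ↦ Φ(x)(e) + b : e ∈ E, b ∈ ℝ } is contained in 𝓑_ψ(X) and is an additive family on X, i.e. it is closed under addition, point separating, and contains the constant functions. -/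
open Filter Topology

/-!
Truncating a continuous `f` at level `±M` gives a bounded continuous function that differs
from `f` only where `|f| > M`, and there by at most `|f|`. A weak-* continuous affine function
`x ↦ Φ x e + b` grows at most linearly in `‖x‖`, while `‖x‖ / η ‖x‖ → 0`; so for `M` large
the set `|f| > M` lies where `|f x| ≤ ε η ‖x‖`, which puts `f` in `𝓑_ψ(X)`.
-/

/-- `f` belongs to `𝓑_ψ(X)` where `X` carries the topology `τ`:  the closure of the
bounded `τ`-continuous functions with respect to the weighted norm
`‖f‖ = sup_x |f x| / ψ x`. -/
def MemBpsiT {X : Type*} (τ : TopologicalSpace X) (ψ : X → ℝ) (f : X → ℝ) : Prop :=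
  ∀ ε > (0 : ℝ), ∃ g : X → ℝ, Continuous[τ, inferInstance] g ∧ (∃ C : ℝ, ∀ x, |g x| ≤ C) ∧
    ∀ x, |f x - g x| ≤ ε * ψ x

lemma abs_sub_max_neg_min_le {M t : ℝ} (hM : 0 ≤ M) : |t - max (-M) (min M t)| ≤ |t| := by
  rcases le_total t M with htM | htM
  · rw [min_eq_right htM]
    rcases le_total (-M) t with hMt | hMt
    · rw [max_eq_right hMt, sub_self, abs_zero]
      exact abs_nonneg t
    · rw [max_eq_left hMt, abs_le]
      constructor <;> linarith [neg_abs_le t, le_abs_self t]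
  · rw [min_eq_left htM, max_eq_right (by linarith), abs_le]
    constructor <;> linarith [neg_abs_le t, le_abs_self t]

lemma max_neg_min_eq_self {M t : ℝ} (ht : |t| ≤ M) : max (-M) (min M t) = t := by
  rw [min_eq_right (abs_le.mp ht).2, max_eq_right (abs_le.mp ht).1]

lemma memBpsiT_of_continuous {X : Type*} {τ : TopologicalSpace X} {ψ f : X → ℝ}
    (hψ : ∀ x, 0 ≤ ψ x) (hf : Continuous[τ, inferInstance] f)
    (hgrowth : ∀ ε > 0, ∃ M, ∀ x, M < |f x| → |f x| ≤ ε * ψ x) : MemBpsiT τ ψ f := by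
  let _ : TopologicalSpace X := τ
  intro ε hε
  obtain ⟨M, hM⟩ := hgrowth ε hε
  set M' := max M 0
  refine ⟨fun x => max (-M') (min M' (f x)), by fun_prop, ⟨M', fun x => ?_⟩, fun x => ?_⟩
  · exact abs_le.2 ⟨le_max_left _ _, max_le (by linarith [le_max_right M 0]) (min_le_left _ _)⟩
  · dsimp only
    rcases le_or_gt |f x| M' with hle | hgt
    · rw [max_neg_min_eq_self hle, sub_self, abs_zero]
      exact mul_nonneg hε.le (hψ x)
    · exact (abs_sub_max_neg_min_le (le_max_right M 0)).trans
        (hM x (lt_of_le_of_lt (le_max_left M 0) hgt))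

lemma exists_le_mul_of_le_affine_of_tendsto_div {η : ℝ → ℝ}
    (hηpos : ∀ᶠ r in atTop, 0 < η r) (hηlim : Tendsto (fun r => r / η r) atTop (𝓝 0))
    {A B ε : ℝ} (hA : 0 ≤ A) (hB : 0 ≤ B) (hε : 0 < ε) :
    ∃ M, ∀ r t, t ≤ A * r + B → M < t → t ≤ ε * η r := by
  have hsmall : ∀ᶠ r in atTop, (A + B) * (r / η r) < ε :=
    (tendsto_order.1 (by simpa using hηlim.const_mul (A + B))).2 ε hε
  obtain ⟨R₀, hR₀⟩ := eventually_atTop.1 (hηpos.and hsmall)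
  set R := max R₀ 1
  refine ⟨A * R + B, fun r t htr hMt => ?_⟩
  have hRr : R < r := lt_of_mul_lt_mul_left (by linarith) hA
  have hr1 : 1 < r := lt_of_le_of_lt (le_max_right _ _) hRr
  obtain ⟨hηr, hratio⟩ := hR₀ r (le_of_lt (lt_of_le_of_lt (le_max_left _ _) hRr))
  rw [← mul_div_assoc, div_lt_iff₀ hηr] at hratio
  calc t ≤ A * r + B := htr
    _ ≤ (A + B) * r := by nlinarith
    _ ≤ ε * η r := hratio.le

lemma continuous_induced_apply_add_const {X E : Type*} (f : X → E → ℝ) (e : E) (b : ℝ) :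
    Continuous[TopologicalSpace.induced f Pi.topologicalSpace, inferInstance]
      (fun x => f x e + b) := by
  let _ : TopologicalSpace X := TopologicalSpace.induced f Pi.topologicalSpace
  exact ((continuous_apply (A := fun _ : E => ℝ) e).comp continuous_induced_dom).add
    continuous_const

lemma abs_apply_add_le {E : Type*} [SeminormedAddCommGroup E] [NormedSpace ℝ E]
    (f : StrongDual ℝ E) (e : E) (b : ℝ) : |f e + b| ≤ ‖e‖ * ‖f‖ + |b| := by
  calc |f e + b| ≤ ‖f e‖ + |b| := abs_add_le _ _
    _ ≤ ‖e‖ * ‖f‖ + |b| := by rw [mul_comm]; gcongr; exact f.le_opNorm e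

theorem weakstar_dual_additive_family_general
    {X E : Type*} [NormedAddCommGroup X] [NormedSpace ℝ X]
    [NormedAddCommGroup E] [NormedSpace ℝ E]
    (Φ : X ≃ₗᵢ[ℝ] StrongDual ℝ E)
    (τw : TopologicalSpace X)
    (hτw : τw = TopologicalSpace.induced (fun (x : X) (e : E) => Φ x e) Pi.topologicalSpace)
    (η : ℝ → ℝ)
    (hηpos : ∀ r ∈ Set.Ici (0 : ℝ), 0 < η r)
    (hηlim : Tendsto (fun r => r / η r) atTop (𝓝 0)) :
    (∀ h ∈ {h : X → ℝ | ∃ (e : E) (b : ℝ), h = fun x => Φ x e + b},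
      MemBpsiT τw (fun x => η ‖x‖) h) ∧
    (∀ h₁ ∈ {h : X → ℝ | ∃ (e : E) (b : ℝ), h = fun x => Φ x e + b},
     ∀ h₂ ∈ {h : X → ℝ | ∃ (e : E) (b : ℝ), h = fun x => Φ x e + b},
      h₁ + h₂ ∈ {h : X → ℝ | ∃ (e : E) (b : ℝ), h = fun x => Φ x e + b}) ∧
    (∀ x₁ x₂ : X, x₁ ≠ x₂ →
      ∃ h ∈ {h : X → ℝ | ∃ (e : E) (b : ℝ), h = fun x => Φ x e + b}, h x₁ ≠ h x₂) ∧
    (∀ b : ℝ,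
      (fun _ : X => b) ∈ {h : X → ℝ | ∃ (e : E) (b : ℝ), h = fun x => Φ x e + b}) := by
  refine ⟨?_, ?_, fun x₁ x₂ hne => ?_, fun b => ⟨0, b, by simp⟩⟩
  · rintro h ⟨e, b, rfl⟩
    subst hτw
    refine memBpsiT_of_continuous (fun x => (hηpos _ (norm_nonneg x)).le)
      (continuous_induced_apply_add_const (fun x e => Φ x e) e b) fun ε hε => ?_
    obtain ⟨M, hM⟩ := exists_le_mul_of_le_affine_of_tendsto_div
      (eventually_atTop.2 ⟨0, hηpos⟩) hηlim (norm_nonneg e) (abs_nonneg b) hε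
    exact ⟨M, fun x => hM ‖x‖ _ (by simpa using abs_apply_add_le (Φ x) e b)⟩
  · rintro _ ⟨e₁, b₁, rfl⟩ _ ⟨e₂, b₂, rfl⟩
    exact ⟨e₁ + e₂, b₁ + b₂, by ext x; simp only [Pi.add_apply, map_add]; ring⟩
  · obtain ⟨e, he⟩ := DFunLike.ne_iff.1 (Φ.injective.ne hne)
    exact ⟨fun x => Φ x e + 0, ⟨e, 0, rfl⟩, by simpa using he⟩

/-- **(Lemma 4.10: additive family on a dual space with the weak-* topology).**
Let `(X, ‖·‖_X)` be a dual Banach space with predual `(E, ‖·‖_E)` and isometric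
isomorphism `Φ : X → E*`, equipped with the weak-* topology `τw` (the topology induced by
the maps `x ↦ Φ(x)(e)`, `e ∈ E`), and let `ψ(x) = η(‖x‖_X)` be an admissible weight
function on `X`, where `η : [0,∞) → (0,∞)` is continuous and non-decreasing with
`lim_{r→∞} r/η(r) = 0`.  Then `𝓗 = { x ↦ Φ(x)(e) + b : e ∈ E, b ∈ ℝ }` is contained in
`𝓑_ψ(X)` and is an additive family on `X`. -/
theorem weakstar_dual_additive_family
    {X E : Type*} [NormedAddCommGroup X] [NormedSpace ℝ X] [CompleteSpace X]
    [NormedAddCommGroup E] [NormedSpace ℝ E] [CompleteSpace E]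
    (Φ : X ≃ₗᵢ[ℝ] StrongDual ℝ E)
    (τw : TopologicalSpace X)
    (hτw : τw = TopologicalSpace.induced (fun (x : X) (e : E) => Φ x e) Pi.topologicalSpace)
    (η : ℝ → ℝ)
    (hηcont : ContinuousOn η (Set.Ici 0))
    (hηmono : MonotoneOn η (Set.Ici 0))
    (hηpos : ∀ r ∈ Set.Ici (0 : ℝ), 0 < η r)
    (hηlim : Tendsto (fun r => r / η r) atTop (𝓝 0))
    (hadm : ∀ R > 0, @IsCompact X τw {x : X | η ‖x‖ ≤ R}) :
    (∀ h ∈ {h : X → ℝ | ∃ (e : E) (b : ℝ), h = fun x => Φ x e + b},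
      MemBpsiT τw (fun x => η ‖x‖) h) ∧
    (∀ h₁ ∈ {h : X → ℝ | ∃ (e : E) (b : ℝ), h = fun x => Φ x e + b},
     ∀ h₂ ∈ {h : X → ℝ | ∃ (e : E) (b : ℝ), h = fun x => Φ x e + b},
      h₁ + h₂ ∈ {h : X → ℝ | ∃ (e : E) (b : ℝ), h = fun x => Φ x e + b}) ∧
    (∀ x₁ x₂ : X, x₁ ≠ x₂ →
      ∃ h ∈ {h : X → ℝ | ∃ (e : E) (b : ℝ), h = fun x => Φ x e + b}, h x₁ ≠ h x₂) ∧
    (∀ b : ℝ,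
      (fun _ : X => b) ∈ {h : X → ℝ | ∃ (e : E) (b : ℝ), h = fun x => Φ x e + b}) :=
  weakstar_dual_additive_family_general Φ τw hτw η hηpos hηlim
end
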